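/- arXiv:1809.09415 — 8 statements merged into one kernel-verified Lean document; each statement's English description precedes it below -/
import Mathlib

section
/- If a finite automaton A satisfies the EDA pattern (there is a state p and a finite word v with two distinct paths from p to p labelled v), then A satisfies the IDA pattern (there are distinct states p, q and a word v with paths p→p, p→q, and q→q all labelled v). -/
structure NAuto (Q A : Type) where
  Δ : Q → A → Q → Prop
  Q0 : Set Q
  F : Set Q

def IsPath {Q A : Type} (δ : Q → A → Q → Prop) (π : List Q) (v : List A) (p q : Q) : Prop :=
  π.length = v.length + 1 ∧ π.head? = some p ∧ π.getLast? = some q ∧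
  ∀ (i : ℕ) a s t, v[i]? = some a → π[i]? = some s → π[i+1]? = some t → δ s a t

def EDAat {Q A : Type} (M : NAuto Q A) (p : Q) : Prop :=
  ∃ (v : List A) (π₁ π₂ : List Q), π₁ ≠ π₂ ∧ IsPath M.Δ π₁ v p p ∧ IsPath M.Δ π₂ v p p

def EDA {Q A : Type} (M : NAuto Q A) : Prop := ∃ p, EDAat M p

def EDAF {Q A : Type} (M : NAuto Q A) : Prop := ∃ p ∈ M.F, EDAat M p

def IDAat {Q A : Type} (M : NAuto Q A) (p q : Q) : Prop :=
  p ≠ q ∧ ∃ (v : List A) (π₁ π₂ π₃ : List Q),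
    IsPath M.Δ π₁ v p p ∧ IsPath M.Δ π₂ v p q ∧ IsPath M.Δ π₃ v q q

def IDA {Q A : Type} (M : NAuto Q A) : Prop := ∃ p q, IDAat M p q

def IDAF {Q A : Type} (M : NAuto Q A) : Prop := ∃ p q, q ∈ M.F ∧ IDAat M p q

def BuchiRuns {Q A : Type} (M : NAuto Q A) (w : ℕ → A) : Set (ℕ → Q) :=
  {ρ | ρ 0 ∈ M.Q0 ∧ (∀ i, M.Δ (ρ i) (w i) (ρ (i+1))) ∧ ∀ n, ∃ m ≥ n, ρ m ∈ M.F}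

def uvWord {A : Type} [Inhabited A] (u v : List A) : ℕ → A :=
  fun i => if i < u.length then u.getD i default else v.getD ((i - u.length) % v.length) default
/-! Two distinct cycles π₁ ≠ π₂ at p with the same label v are, at some position i, in different
states s ≠ t. Rotating v to start at position i turns each cycle into a cycle at its state at
position i, and following π₁ from s back to p and then π₂ from p to t gives a path from s to t
with the same rotated label. -/

namespace IsPath

variable {Q A : Type} {δ : Q → A → Q → Prop} {π π₁ π₂ : List Q} {v v₁ v₂ : List A} {p q r s : Q}

theorem iff_getElem? :
    IsPath δ π v p q ↔ π.length = v.length + 1 ∧ π[0]? = some p ∧ π[v.length]? = some q ∧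
      ∀ i a s t, v[i]? = some a → π[i]? = some s → π[i+1]? = some t → δ s a t := by
  refine and_congr_right fun hl => ?_
  rw [List.head?_eq_getElem?, List.getLast?_eq_getElem?, hl, Nat.add_sub_cancel]

theorem append (h₁ : IsPath δ π₁ v₁ p q) (h₂ : IsPath δ π₂ v₂ q r) :
    IsPath δ (π₁ ++ π₂.tail) (v₁ ++ v₂) p r := by
  rw [iff_getElem?] at h₁ h₂ ⊢
  obtain ⟨hl₁, hp₁, hq₁, hδ₁⟩ := h₁
  obtain ⟨hl₂, hq₂, hr₂, hδ₂⟩ := h₂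
  have low : ∀ j ≤ v₁.length, (π₁ ++ π₂.tail)[j]? = π₁[j]? := fun j hj => by
    rw [List.getElem?_append_left (by omega)]
  -- the junction state `q` is both the last entry of `π₁` and the dropped head of `π₂`
  have high : ∀ j, (π₁ ++ π₂.tail)[v₁.length + j]? = π₂[j]? := by
    rintro (_ | j)
    · rw [Nat.add_zero, low _ le_rfl, hq₁, hq₂]
    · rw [List.getElem?_append_right (by omega), List.getElem?_tail]
      congr 1
      omega
  refine ⟨by simp; omega, by rw [low 0 (Nat.zero_le _), hp₁], ?_, ?_⟩
  · rw [List.length_append, high, hr₂]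
  · intro i a s t ha hs ht
    by_cases hi : i < v₁.length
    · rw [List.getElem?_append_left hi] at ha
      rw [low i hi.le] at hs
      rw [low (i + 1) hi] at ht
      exact hδ₁ i a s t ha hs ht
    · obtain ⟨j, rfl⟩ := Nat.exists_eq_add_of_le (not_lt.mp hi)
      rw [List.getElem?_append_right (not_lt.mp hi), Nat.add_sub_cancel_left] at ha
      rw [high] at hs
      rw [Nat.add_assoc, high] at ht
      exact hδ₂ j a s t ha hs ht

theorem take (h : IsPath δ π v p q) {i : ℕ} (hi : i ≤ v.length) (hs : π[i]? = some s) :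
    IsPath δ (π.take (i + 1)) (v.take i) p s := by
  rw [iff_getElem?] at h ⊢
  obtain ⟨hl, hp, -, hδ⟩ := h
  have hvi : (v.take i).length = i := List.length_take_of_le hi
  refine ⟨by simp [hl, hvi]; omega, ?_, ?_, ?_⟩
  · rwa [List.getElem?_take_of_lt (Nat.succ_pos i)]
  · rwa [hvi, List.getElem?_take_of_lt (Nat.lt_succ_self i)]
  · intro j a s' t ha hs' ht
    have hj : j < i := hvi ▸ (List.getElem?_eq_some_iff.mp ha).1
    rw [List.getElem?_take_of_lt hj] at ha
    rw [List.getElem?_take_of_lt (by omega)] at hs' ht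
    exact hδ j a s' t ha hs' ht

theorem drop (h : IsPath δ π v p q) {i : ℕ} (hi : i ≤ v.length) (hs : π[i]? = some s) :
    IsPath δ (π.drop i) (v.drop i) s q := by
  rw [iff_getElem?] at h ⊢
  obtain ⟨hl, -, hq, hδ⟩ := h
  refine ⟨by simp [hl]; omega, by rwa [List.getElem?_drop, Nat.add_zero], ?_, ?_⟩
  · rwa [List.getElem?_drop, List.length_drop, Nat.add_sub_cancel' hi]
  · intro j a s' t ha hs' ht
    rw [List.getElem?_drop] at ha hs' ht
    exact hδ (i + j) a s' t ha hs' ht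

theorem exists_getElem?_ne (h₁ : IsPath δ π₁ v p q) (h₂ : IsPath δ π₂ v p q) (hne : π₁ ≠ π₂) :
    ∃ i ≤ v.length, ∃ s t, s ≠ t ∧ π₁[i]? = some s ∧ π₂[i]? = some t := by
  have hl : π₁.length = π₂.length := h₁.1.trans h₂.1.symm
  obtain ⟨i, hi₁, hi₂, hst⟩ : ∃ i, ∃ (hi₁ : i < π₁.length) (hi₂ : i < π₂.length),
      π₁[i] ≠ π₂[i] := by
    by_contra! hall
    exact hne (List.ext_getElem hl hall)
  refine ⟨i, by have := h₁.1; omega, π₁[i], π₂[i], hst, ?_, ?_⟩ <;> simp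

end IsPath

theorem eda_implies_ida {Q A : Type} (M : NAuto Q A) (h : EDA M) : IDA M := by
  obtain ⟨p, v, π₁, π₂, hne, h₁, h₂⟩ := h
  obtain ⟨i, hi, s, t, hst, hs, ht⟩ := h₁.exists_getElem?_ne h₂ hne
  exact ⟨s, t, hst, v.drop i ++ v.take i, _, _, _,
    (h₁.drop hi hs).append (h₁.take hi hs),
    (h₁.drop hi hs).append (h₂.take hi ht),
    (h₂.drop hi ht).append (h₂.take hi ht)⟩
end

section
/- If an automaton A does not satisfy EDA_F, then for every accepting state q ∈ F and every infinite word w, the number of infinite paths of A starting at q, labelled by w, that visit q infinitely often is at most |Q|. -/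
open Filter

section Runs

variable {Q A : Type}

abbrev IsRun (δ : Q → A → Q → Prop) (w : ℕ → A) (ρ : ℕ → Q) : Prop :=
  ∀ i, δ (ρ i) (w i) (ρ (i + 1))

lemma IsRun.isPath_ofFn {δ : Q → A → Q → Prop} {w : ℕ → A} {ρ : ℕ → Q} (hρ : IsRun δ w ρ)
    (N : ℕ) :
    IsPath δ (List.ofFn fun i : Fin (N + 1) => ρ i) (List.ofFn fun i : Fin N => w i)
      (ρ 0) (ρ N) := by
  refine ⟨by simp, by simp [List.ofFn_succ], ?_, ?_⟩
  · rw [List.getLast?_eq_getElem?, List.getElem?_ofFn]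
    simp
  · intro i a s t hv hs ht
    simp only [List.getElem?_ofFn] at hv hs ht
    by_cases hiN : i < N
    · simp [hiN, show i < N + 1 by omega] at hv hs ht
      subst hv hs ht
      exact hρ i
    · simp [hiN] at hv

lemma IsRun.piecewise {δ : Q → A → Q → Prop} {w : ℕ → A} {ρ₁ ρ₂ : ℕ → Q}
    (h₁ : IsRun δ w ρ₁) (h₂ : IsRun δ w ρ₂) {m : ℕ} (hm : ρ₁ m = ρ₂ m) :
    IsRun δ w fun k => if k ≤ m then ρ₁ k else ρ₂ k := by
  intro i
  dsimp only
  split_ifs with hi hi' hi'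
  · exact h₁ i
  · obtain rfl : i = m := by omega
    exact hm ▸ h₂ i
  · omega
  · exact h₂ i

lemma edaAt_of_isRun_ne {M : NAuto Q A} {w : ℕ → A} {p : Q} {ρ₁ ρ₂ : ℕ → Q}
    (h₁ : IsRun M.Δ w ρ₁) (h₂ : IsRun M.Δ w ρ₂) {N : ℕ}
    (h₁0 : ρ₁ 0 = p) (h₂0 : ρ₂ 0 = p) (h₁N : ρ₁ N = p) (h₂N : ρ₂ N = p)
    {d : ℕ} (hdN : d ≤ N) (hd : ρ₁ d ≠ ρ₂ d) : EDAat M p := by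
  refine ⟨_, _, _, ?_, h₁0 ▸ h₁N ▸ h₁.isPath_ofFn N, h₂0 ▸ h₂N ▸ h₂.isPath_ofFn N⟩
  rw [Ne, List.ofFn_inj]
  exact fun he => hd (congrFun he ⟨d, by omega⟩)

lemma IsRun.ne_of_le {M : NAuto Q A} {w : ℕ → A} {p : Q} (hp : ¬ EDAat M p) {ρ₁ ρ₂ : ℕ → Q}
    (h₁ : IsRun M.Δ w ρ₁) (h₂ : IsRun M.Δ w ρ₂) (h₁0 : ρ₁ 0 = p) (h₂0 : ρ₂ 0 = p)
    (h₂p : ∀ n, ∃ m ≥ n, ρ₂ m = p) {d m : ℕ} (hdm : d ≤ m) (hd : ρ₁ d ≠ ρ₂ d) :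
    ρ₁ m ≠ ρ₂ m := by
  intro hm
  obtain ⟨N, hmN, hN⟩ := h₂p (m + 1)
  refine hp (edaAt_of_isRun_ne (h₁.piecewise h₂ hm) h₂ (N := N) (d := d) ?_ h₂0 ?_ hN
    (by omega) ?_)
  · simp [h₁0]
  · simp [show ¬ N ≤ m by omega, hN]
  · simpa [hdm] using hd

end Runs

theorem Set.finite_and_ncard_le_of_pairwise_eventually_ne {ι α : Type*} [Fintype α]
    {l : Filter ι} [l.NeBot] {S : Set (ι → α)}
    (hS : S.Pairwise fun f g => ∀ᶠ i in l, f i ≠ g i) :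
    S.Finite ∧ S.ncard ≤ Fintype.card α := by
  classical
  have hsub : ∀ t : Finset (ι → α), ↑t ⊆ S → t.card ≤ Fintype.card α := by
    intro t ht
    have hev : ∀ᶠ i in l, ∀ f ∈ t, ∀ g ∈ t, f ≠ g → f i ≠ g i := by
      simp only [eventually_all_finset, eventually_imp_distrib_left]
      exact fun f hf g hg hfg => hS (ht hf) (ht hg) hfg
    obtain ⟨i, hi⟩ := hev.exists
    have hinj : Set.InjOn (· i) (t : Set (ι → α)) := fun f hf g hg hfg =>
      by_contra fun hne => hi f hf g hg hne hfg
    calc t.card ≤ (Finset.univ : Finset α).card :=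
          Finset.card_le_card_of_injOn (· i) (fun _ _ => Finset.mem_coe.2 (Finset.mem_univ _)) hinj
      _ = Fintype.card α := Finset.card_univ
  have hfin : S.Finite := by
    by_contra hinf
    obtain ⟨t, hts, htc⟩ := Set.Infinite.exists_subset_card_eq hinf (Fintype.card α + 1)
    have := hsub t hts
    omega
  refine ⟨hfin, ?_⟩
  rw [Set.ncard_eq_toFinset_card S hfin]
  exact hsub _ (by simp)

theorem not_edaF_bounded_paths {Q A : Type} [Fintype Q] (M : NAuto Q A) (h : ¬ EDAF M)
    (q : Q) (hq : q ∈ M.F) (w : ℕ → A) :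
    {ρ : ℕ → Q | ρ 0 = q ∧ (∀ i, M.Δ (ρ i) (w i) (ρ (i+1))) ∧ ∀ n, ∃ m ≥ n, ρ m = q}.Finite ∧
    Nat.card {ρ : ℕ → Q | ρ 0 = q ∧ (∀ i, M.Δ (ρ i) (w i) (ρ (i+1))) ∧ ∀ n, ∃ m ≥ n, ρ m = q}
      ≤ Fintype.card Q := by
  have hq' : ¬ EDAat M q := fun hE => h ⟨q, hq, hE⟩
  rw [Nat.card_coe_set_eq]
  refine Set.finite_and_ncard_le_of_pairwise_eventually_ne (l := atTop) ?_
  rintro ρ₁ ⟨h₁0, h₁, -⟩ ρ₂ ⟨h₂0, h₂, h₂q⟩ hne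
  obtain ⟨d, hd⟩ := Function.ne_iff.mp hne
  exact eventually_atTop.2 ⟨d, fun m hdm => IsRun.ne_of_le hq' h₁ h₂ h₁0 h₂0 h₂q hdm hd⟩
end

section
/- If A satisfies EDA_F, then there exists an infinite word w such that the set of accepting Büchi runs of A on w has cardinality 2^ℵ₀ (is uncountable); in particular, for an EDA_F pattern (p, v, π₁, π₂) with p ∈ F reachable from an initial state via a word u, the word u v^ω has uncountably many accepting runs. -/
/-!
Every infinite sequence of choices between the two loops `π₁`, `π₂` at `p` gives an accepting
run of `M` on `u v^ω`: follow `π₀` to `p`, then traverse the chosen loops one after the other.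
Distinct choice sequences give distinct runs, so there are at least `2^ℵ₀` accepting runs; and
there are at most `|Q|^ℵ₀ ≤ 2^ℵ₀` sequences of states at all.
-/

open Cardinal

section Paths

variable {Q A : Type} {δ : Q → A → Q → Prop} {π : List Q} {v : List A} {p q : Q}

lemma IsPath.getD_zero (h : IsPath δ π v p q) (d : Q) : π.getD 0 d = p := by
  rw [List.getD_eq_getElem?_getD, ← List.head?_eq_getElem?, h.2.1, Option.getD_some]

lemma IsPath.getD_length (h : IsPath δ π v p q) (d : Q) : π.getD v.length d = q := by
  have hlen := h.1
  rw [List.getD_eq_getElem?_getD, show v.length = π.length - 1 by omega,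
    ← List.getLast?_eq_getElem?, h.2.2.1, Option.getD_some]

lemma IsPath.step (h : IsPath δ π v p q) {i : ℕ} (hi : i < v.length) (a : A) (d : Q) :
    δ (π.getD i d) (v.getD i a) (π.getD (i + 1) d) := by
  have hlen := h.1
  refine h.2.2.2 i _ _ _ ?_ ?_ ?_ <;>
    rw [List.getD_eq_getElem _ _ (by omega)] <;> exact List.getElem?_eq_getElem (by omega)

lemma IsPath.eq_singleton_of_nil (h : IsPath δ π [] p q) : π = [p] := by
  obtain ⟨a, rfl⟩ := List.length_eq_one_iff.mp h.1
  simpa using h.2.1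

lemma IsPath.length_pos_of_ne {π' : List Q} (h : IsPath δ π v p q) (h' : IsPath δ π' v p q)
    (hne : π ≠ π') : 0 < v.length := by
  rcases v with _ | ⟨a, v⟩
  · exact absurd (h.eq_singleton_of_nil.trans h'.eq_singleton_of_nil.symm) hne
  · exact Nat.succ_pos _

lemma IsPath.cond {π' : List Q} (h : IsPath δ π v p q) (h' : IsPath δ π' v p q) (b : Bool) :
    IsPath δ (bif b then π else π') v p q := by
  cases b <;> assumption

end Paths

section Loops

def loopConcat {Q : Type} (σ : ℕ → List Q) (L : ℕ) (d : Q) (n : ℕ) : Q :=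
  (σ (n / L)).getD (n % L) d

variable {Q A : Type} {δ : Q → A → Q → Prop} {σ : ℕ → List Q} {v : List A} {p : Q}

/-- Also valid for `r = v.length`, because each loop ends where the next one starts. -/
lemma loopConcat_mul_add (hσ : ∀ k, IsPath δ (σ k) v p p) (hL : 0 < v.length) (k : ℕ)
    {r : ℕ} (hr : r ≤ v.length) :
    loopConcat σ v.length p (k * v.length + r) = (σ k).getD r p := by
  rcases hr.lt_or_eq with hr | rfl
  · rw [loopConcat, add_comm, Nat.add_mul_div_right _ _ hL, Nat.add_mul_mod_self_right,
      Nat.div_eq_of_lt hr, Nat.mod_eq_of_lt hr, zero_add]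
  · rw [(hσ k).getD_length, ← Nat.succ_mul, loopConcat, Nat.mul_div_cancel _ hL,
      Nat.mul_mod_left, (hσ _).getD_zero]

lemma loopConcat_step (hσ : ∀ k, IsPath δ (σ k) v p p) (hL : 0 < v.length) (a : A) (n : ℕ) :
    δ (loopConcat σ v.length p n) (v.getD (n % v.length) a)
      (loopConcat σ v.length p (n + 1)) := by
  obtain ⟨k, r, hr, rfl⟩ : ∃ k r, r < v.length ∧ n = k * v.length + r :=
    ⟨n / v.length, n % v.length, Nat.mod_lt _ hL, (Nat.div_add_mod' n v.length).symm⟩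
  rw [Nat.mul_add_mod_of_lt hr, add_assoc, loopConcat_mul_add hσ hL _ hr.le,
    loopConcat_mul_add hσ hL _ hr]
  exact (hσ k).step hr a p

lemma loopConcat_injective {σ' : ℕ → List Q} (hσ : ∀ k, IsPath δ (σ k) v p p)
    (hσ' : ∀ k, IsPath δ (σ' k) v p p) (hL : 0 < v.length)
    (heq : loopConcat σ v.length p = loopConcat σ' v.length p) : σ = σ' := by
  funext k
  apply List.ext_getElem ((hσ k).1.trans (hσ' k).1.symm)
  intro i hi hi'
  have hr : i ≤ v.length := by have := (hσ k).1; omega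
  rw [← List.getD_eq_getElem _ p hi, ← List.getD_eq_getElem _ p hi',
    ← loopConcat_mul_add hσ hL k hr, ← loopConcat_mul_add hσ' hL k hr, heq]

end Loops

section Prefix

def prependPath {Q : Type} (π : List Q) (U : ℕ) (ρ : ℕ → Q) (n : ℕ) : Q :=
  if n < U then π.getD n (ρ 0) else ρ (n - U)

variable {Q A : Type} {δ : Q → A → Q → Prop} {π : List Q} {u : List A} {ρ : ℕ → Q} {p q : Q}

lemma prependPath_add (π : List Q) (U : ℕ) (ρ : ℕ → Q) (m : ℕ) :
    prependPath π U ρ (U + m) = ρ m := by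
  simp [prependPath]

lemma prependPath_of_le (h : IsPath δ π u q p) (hρ : ρ 0 = p) {n : ℕ} (hn : n ≤ u.length) :
    prependPath π u.length ρ n = π.getD n p := by
  rcases hn.lt_or_eq with hn | rfl
  · simp [prependPath, hn, hρ]
  · rw [h.getD_length, ← hρ, ← prependPath_add π u.length ρ 0, add_zero]

lemma prependPath_step (h : IsPath δ π u q p) (hρ : ρ 0 = p) {w : ℕ → A}
    (hstep : ∀ i, δ (ρ i) (w i) (ρ (i + 1))) (a : A) (i : ℕ) :
    δ (prependPath π u.length ρ i) (if i < u.length then u.getD i a else w (i - u.length))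
      (prependPath π u.length ρ (i + 1)) := by
  by_cases hi : i < u.length
  · rw [if_pos hi, prependPath_of_le h hρ hi.le, prependPath_of_le h hρ hi]
    exact h.step hi a p
  · obtain ⟨m, rfl⟩ := Nat.exists_eq_add_of_le (not_lt.mp hi)
    rw [if_neg hi, add_assoc, prependPath_add, prependPath_add, Nat.add_sub_cancel_left]
    exact hstep m

end Prefix

section Buchi

variable {Q A : Type} {M : NAuto Q A} {σ : ℕ → List Q} {π₀ : List Q}
  {u v : List A} {p q₀ : Q}

def loopRun (π₀ : List Q) (U : ℕ) (σ : ℕ → List Q) (L : ℕ) (p : Q) : ℕ → Q :=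
  prependPath π₀ U (loopConcat σ L p)

lemma loopRun_mem_buchiRuns [Inhabited A] (hq₀ : q₀ ∈ M.Q0) (h₀ : IsPath M.Δ π₀ u q₀ p)
    (hp : p ∈ M.F) (hσ : ∀ k, IsPath M.Δ (σ k) v p p) (hL : 0 < v.length) :
    loopRun π₀ u.length σ v.length p ∈ BuchiRuns M (uvWord u v) := by
  have hρ₀ : loopConcat σ v.length p 0 = p := by
    have h := loopConcat_mul_add hσ hL 0 (Nat.zero_le _)
    rwa [zero_mul, (hσ 0).getD_zero] at h
  refine ⟨?_, prependPath_step h₀ hρ₀ (loopConcat_step hσ hL default) default, fun n => ?_⟩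
  · rw [loopRun, prependPath_of_le h₀ hρ₀ (Nat.zero_le _), h₀.getD_zero]
    exact hq₀
  · refine ⟨u.length + n * v.length, le_add_left (Nat.le_mul_of_pos_right n hL), ?_⟩
    rw [loopRun, prependPath_add, ← add_zero (n * v.length), loopConcat_mul_add hσ hL n
      (Nat.zero_le _), (hσ n).getD_zero]
    exact hp

lemma loopRun_injective {π₁ π₂ : List Q} (h₁ : IsPath M.Δ π₁ v p p) (h₂ : IsPath M.Δ π₂ v p p)
    (hne : π₁ ≠ π₂) (U : ℕ) :
    Function.Injective fun f : ℕ → Bool =>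
      loopRun π₀ U (fun k => bif f k then π₁ else π₂) v.length p := by
  have hL := h₁.length_pos_of_ne h₂ hne
  have hpick_inj : Function.Injective fun b : Bool => bif b then π₁ else π₂ := by
    intro a b; cases a <;> cases b <;> simp [hne, hne.symm]
  intro f g hfg
  have hconcat := funext fun m => (prependPath_add π₀ U _ m).symm.trans
    ((congrFun hfg (U + m)).trans (prependPath_add π₀ U _ m))
  exact hpick_inj.comp_left
    (loopConcat_injective (fun k => h₁.cond h₂ (f k)) (fun k => h₁.cond h₂ (g k)) hL hconcat)

end Buchi

lemma mk_buchiRuns_le_continuum {Q A : Type} [Countable Q] (M : NAuto Q A) (w : ℕ → A) :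
    #(BuchiRuns M w) ≤ 𝔠 :=
  calc #(BuchiRuns M w) ≤ #(ℕ → Q) := mk_set_le _
    _ ≤ ℵ₀ ^ ℵ₀ := by
      rw [mk_arrow, lift_id, lift_id, mk_nat]
      exact power_le_power_right mk_le_aleph0
    _ = 𝔠 := aleph0_power_aleph0

theorem edaF_uncountable {Q A : Type} [Fintype Q] [Inhabited A] (M : NAuto Q A)
    (p : Q) (hp : p ∈ M.F) (v : List A) (π₁ π₂ : List Q) (hne : π₁ ≠ π₂)
    (h1 : IsPath M.Δ π₁ v p p) (h2 : IsPath M.Δ π₂ v p p)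
    (u : List A) (q0 : Q) (hq0 : q0 ∈ M.Q0) (π₀ : List Q) (h0 : IsPath M.Δ π₀ u q0 p) :
    (∃ w : ℕ → A, Cardinal.mk (BuchiRuns M w) = Cardinal.continuum) ∧
    Cardinal.mk (BuchiRuns M (uvWord u v)) = Cardinal.continuum := by
  have hL := h1.length_pos_of_ne h2 hne
  have hmem (f : ℕ → Bool) :
      loopRun π₀ u.length (fun k => bif f k then π₁ else π₂) v.length p
        ∈ BuchiRuns M (uvWord u v) :=
    loopRun_mem_buchiRuns hq0 h0 hp (fun k => h1.cond h2 (f k)) hL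
  have hlower : 𝔠 ≤ #(BuchiRuns M (uvWord u v)) := by
    have := mk_le_of_injective (f := fun f => (⟨_, hmem f⟩ : BuchiRuns M (uvWord u v)))
      fun f g hfg => loopRun_injective h1 h2 hne u.length (congrArg Subtype.val hfg)
    simpa using this
  have hcard := le_antisymm (mk_buchiRuns_le_continuum M _) hlower
  exact ⟨⟨_, hcard⟩, hcard⟩
end

section
/- If A satisfies IDA_F and the state p of the IDA_F pattern is reachable from an initial state, then there exists an ultimately periodic word u v^ω on which A has infinitely many (at least ℵ₀) distinct accepting Büchi runs. -/
namespace IsPath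

variable {Q A : Type} {δ : Q → A → Q → Prop} {π : List Q} {v : List A} {s t : Q}

theorem getD_zero_s4 (h : IsPath δ π v s t) (d : Q) : π.getD 0 d = s := by
  rw [List.getD_eq_getElem?_getD, ← List.head?_eq_getElem?, h.2.1]
  rfl

theorem getD_length_s4 (h : IsPath δ π v s t) (d : Q) : π.getD v.length d = t := by
  have hlast : π.length - 1 = v.length := by rw [h.1]; rfl
  rw [List.getD_eq_getElem?_getD, ← hlast, ← List.getLast?_eq_getElem?, h.2.2.1]
  rfl

theorem step_getD (h : IsPath δ π v s t) (d : Q) (a : A) {r : ℕ} (hr : r < v.length) :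
    δ (π.getD r d) (v.getD r a) (π.getD (r + 1) d) := by
  have hr' : r + 1 < π.length := by rw [h.1]; omega
  rw [List.getD_eq_getElem _ _ hr, List.getD_eq_getElem _ _ hr',
    List.getD_eq_getElem _ _ (Nat.lt_of_succ_lt hr')]
  exact h.2.2.2 r _ _ _ (List.getElem?_eq_getElem hr) (List.getElem?_eq_getElem _)
    (List.getElem?_eq_getElem hr')

theorem length_pos_of_ne_s4 (h : IsPath δ π v s t) (hst : s ≠ t) : 0 < v.length := by
  by_contra hv
  have h' := h.getD_length_s4 s
  rw [Nat.eq_zero_of_not_pos hv, h.getD_zero_s4] at h'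
  exact hst h'

end IsPath

section Splice

variable {α : Type*} {n : ℕ} {x y : ℕ → α}

def spliceAt (n : ℕ) (x y : ℕ → α) (i : ℕ) : α := if i < n then x i else y (i - n)

theorem uvWord_eq_spliceAt {A : Type} [Inhabited A] (u v : List A) :
    uvWord u v = spliceAt u.length (u.getD · default) (fun m => v.getD (m % v.length) default) :=
  rfl

@[simp]
theorem spliceAt_add (n m : ℕ) : spliceAt n x y (n + m) = y m := by
  simp [spliceAt]

theorem spliceAt_of_le (hxy : x n = y 0) {i : ℕ} (hi : i ≤ n) : spliceAt n x y i = x i := by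
  rcases hi.lt_or_eq with hi | rfl
  · exact if_pos hi
  · simp [spliceAt, hxy]

theorem spliceAt_injective : Function.Injective (spliceAt n x) := fun y y' h =>
  funext fun m => by simpa using congrFun h (n + m)

end Splice

section Runs

variable {Q A : Type} {δ : Q → A → Q → Prop}

theorem step_spliceAt {n : ℕ} {α β : ℕ → Q} {x y : ℕ → A}
    (hα : ∀ i < n, δ (α i) (x i) (α (i + 1))) (hαβ : α n = β 0)
    (hβ : ∀ m, δ (β m) (y m) (β (m + 1))) (i : ℕ) :
    δ (spliceAt n α β i) (spliceAt n x y i) (spliceAt n α β (i + 1)) := by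
  by_cases hi : i < n
  · rw [spliceAt_of_le hαβ hi.le, spliceAt_of_le hαβ hi, spliceAt, if_pos hi]
    exact hα i hi
  · obtain ⟨m, rfl⟩ := Nat.exists_eq_add_of_le (not_lt.1 hi)
    rw [add_assoc, spliceAt_add, spliceAt_add, spliceAt_add]
    exact hβ m

theorem spliceAt_mem_buchiRuns {M : NAuto Q A} {n : ℕ} {α β : ℕ → Q} {x y : ℕ → A}
    (hα₀ : α 0 ∈ M.Q0) (hα : ∀ i < n, M.Δ (α i) (x i) (α (i + 1))) (hαβ : α n = β 0)
    (hβ : ∀ m, M.Δ (β m) (y m) (β (m + 1))) (hF : ∀ N, ∃ m ≥ N, β m ∈ M.F) :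
    spliceAt n α β ∈ BuchiRuns M (spliceAt n x y) := by
  refine ⟨by rwa [spliceAt_of_le hαβ n.zero_le], step_spliceAt hα hαβ hβ, fun N => ?_⟩
  obtain ⟨m, hm, hmF⟩ := hF N
  exact ⟨n + m, by omega, by rwa [spliceAt_add]⟩

def concatBlocks (L : ℕ) (σ : ℕ → ℕ → Q) (m : ℕ) : Q := σ (m / L) (m % L)

variable {L : ℕ} {σ : ℕ → ℕ → Q}

theorem concatBlocks_mul_add (hL : 0 < L) (hjoin : ∀ j, σ j L = σ (j + 1) 0) (j : ℕ) {r : ℕ}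
    (hr : r ≤ L) : concatBlocks L σ (L * j + r) = σ j r := by
  rcases hr.lt_or_eq with hr | rfl
  · simp [concatBlocks, Nat.mul_add_div hL, Nat.div_eq_of_lt hr, Nat.mod_eq_of_lt hr]
  · rw [hjoin, ← Nat.mul_add_one]
    simp [concatBlocks, Nat.mul_div_cancel_left _ hL]

theorem step_concatBlocks (hL : 0 < L) (hjoin : ∀ j, σ j L = σ (j + 1) 0) {x : ℕ → A}
    (hσ : ∀ j, ∀ r < L, δ (σ j r) (x r) (σ j (r + 1))) (m : ℕ) :
    δ (concatBlocks L σ m) (x (m % L)) (concatBlocks L σ (m + 1)) := by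
  obtain ⟨j, r, hr, rfl⟩ : ∃ j r, r < L ∧ m = L * j + r :=
    ⟨m / L, m % L, Nat.mod_lt m hL, (Nat.div_add_mod m L).symm⟩
  rw [Nat.mul_add_mod, Nat.mod_eq_of_lt hr, concatBlocks_mul_add hL hjoin j hr.le, add_assoc,
    concatBlocks_mul_add hL hjoin j hr]
  exact hσ j r hr

end Runs

section Lasso

variable {Q A : Type} {δ : Q → A → Q → Prop} {p q : Q} {v : List A} {π₁ π₂ π₃ : List Q}

def idaBlocks (π₁ π₂ π₃ : List Q) (d : Q) (k j r : ℕ) : Q :=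
  (if j < k then π₁ else if j = k then π₂ else π₃).getD r d

theorem idaBlocks_zero (h1 : IsPath δ π₁ v p p) (h2 : IsPath δ π₂ v p q)
    (h3 : IsPath δ π₃ v q q) (d : Q) (k j : ℕ) :
    idaBlocks π₁ π₂ π₃ d k j 0 = if j ≤ k then p else q := by
  rcases lt_trichotomy j k with hj | rfl | hj
  · rw [idaBlocks, if_pos hj, if_pos hj.le, h1.getD_zero_s4]
  · rw [idaBlocks, if_neg (lt_irrefl j), if_pos rfl, if_pos le_rfl, h2.getD_zero_s4]
  · rw [idaBlocks, if_neg (not_lt.2 hj.le), if_neg hj.ne', if_neg (not_le.2 hj), h3.getD_zero_s4]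

theorem idaBlocks_length (h1 : IsPath δ π₁ v p p) (h2 : IsPath δ π₂ v p q)
    (h3 : IsPath δ π₃ v q q) (d : Q) (k j : ℕ) :
    idaBlocks π₁ π₂ π₃ d k j v.length = idaBlocks π₁ π₂ π₃ d k (j + 1) 0 := by
  rw [idaBlocks_zero h1 h2 h3]
  rcases lt_trichotomy j k with hj | rfl | hj
  · rw [idaBlocks, if_pos hj, if_pos (Nat.succ_le_of_lt hj), h1.getD_length_s4]
  · rw [idaBlocks, if_neg (lt_irrefl j), if_pos rfl, if_neg (by omega), h2.getD_length_s4]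
  · rw [idaBlocks, if_neg (not_lt.2 hj.le), if_neg hj.ne', if_neg (by omega), h3.getD_length_s4]

theorem idaBlocks_step (h1 : IsPath δ π₁ v p p) (h2 : IsPath δ π₂ v p q)
    (h3 : IsPath δ π₃ v q q) (d : Q) (a : A) (k j : ℕ) {r : ℕ} (hr : r < v.length) :
    δ (idaBlocks π₁ π₂ π₃ d k j r) (v.getD r a) (idaBlocks π₁ π₂ π₃ d k j (r + 1)) := by
  unfold idaBlocks
  split_ifs
  exacts [h1.step_getD d a hr, h2.step_getD d a hr, h3.step_getD d a hr]

def idaRun (π₁ π₂ π₃ : List Q) (d : Q) (L k : ℕ) : ℕ → Q :=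
  concatBlocks L (idaBlocks π₁ π₂ π₃ d k)

theorem idaRun_mul (h1 : IsPath δ π₁ v p p) (h2 : IsPath δ π₂ v p q)
    (h3 : IsPath δ π₃ v q q) (hv : 0 < v.length) (d : Q) (k j : ℕ) :
    idaRun π₁ π₂ π₃ d v.length k (v.length * j) = if j ≤ k then p else q := by
  have h := concatBlocks_mul_add hv (idaBlocks_length h1 h2 h3 d k) j v.length.zero_le
  rwa [add_zero, idaBlocks_zero h1 h2 h3] at h

theorem idaRun_step (h1 : IsPath δ π₁ v p p) (h2 : IsPath δ π₂ v p q)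
    (h3 : IsPath δ π₃ v q q) (hv : 0 < v.length) (d : Q) (a : A) (k m : ℕ) :
    δ (idaRun π₁ π₂ π₃ d v.length k m) (v.getD (m % v.length) a)
      (idaRun π₁ π₂ π₃ d v.length k (m + 1)) :=
  step_concatBlocks hv (idaBlocks_length h1 h2 h3 d k)
    (fun j _ hr => idaBlocks_step h1 h2 h3 d a k j hr) m

theorem exists_ge_idaRun_eq (h1 : IsPath δ π₁ v p p) (h2 : IsPath δ π₂ v p q)
    (h3 : IsPath δ π₃ v q q) (hv : 0 < v.length) (d : Q) (k N : ℕ) :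
    ∃ m ≥ N, idaRun π₁ π₂ π₃ d v.length k m = q := by
  refine ⟨v.length * (k + N + 1), ?_, by simp [idaRun_mul h1 h2 h3 hv]⟩
  nlinarith

theorem idaRun_injective (hpq : p ≠ q) (h1 : IsPath δ π₁ v p p) (h2 : IsPath δ π₂ v p q)
    (h3 : IsPath δ π₃ v q q) (hv : 0 < v.length) (d : Q) :
    Function.Injective (idaRun π₁ π₂ π₃ d v.length) := by
  intro k k' he
  by_contra hne
  wlog hlt : k < k' generalizing k k'
  · exact this he.symm (Ne.symm hne) (by omega)
  have h := congrFun he (v.length * (k + 1))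
  simp only [idaRun_mul h1 h2 h3 hv] at h
  exact hpq (by simpa [hlt] using h.symm)

end Lasso

theorem idaF_countably_many_runs {Q A : Type} [Inhabited A] (M : NAuto Q A)
    (p q : Q) (hpq : p ≠ q) (hq : q ∈ M.F) (v : List A) (π₁ π₂ π₃ : List Q)
    (h1 : IsPath M.Δ π₁ v p p) (h2 : IsPath M.Δ π₂ v p q) (h3 : IsPath M.Δ π₃ v q q)
    (u : List A) (q0 : Q) (hq0 : q0 ∈ M.Q0) (π₀ : List Q) (h0 : IsPath M.Δ π₀ u q0 p) :
    Cardinal.aleph0 ≤ Cardinal.mk (BuchiRuns M (uvWord u v)) := by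
  have hv : 0 < v.length := h2.length_pos_of_ne_s4 hpq
  let ρ (k : ℕ) : ℕ → Q := spliceAt u.length (π₀.getD · p) (idaRun π₁ π₂ π₃ p v.length k)
  have hρ (k : ℕ) : ρ k ∈ BuchiRuns M (uvWord u v) := by
    rw [uvWord_eq_spliceAt]
    refine spliceAt_mem_buchiRuns (by rwa [h0.getD_zero_s4]) (fun i hi => h0.step_getD p default hi)
      ?_ (idaRun_step h1 h2 h3 hv p default k) fun N => ?_
    · have h := idaRun_mul h1 h2 h3 hv p k 0
      rw [Nat.mul_zero, if_pos k.zero_le] at h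
      rw [h0.getD_length_s4, h]
    · obtain ⟨m, hm, hmq⟩ := exists_ge_idaRun_eq h1 h2 h3 hv p k N
      exact ⟨m, hm, hmq ▸ hq⟩
  have hρ_inj : Function.Injective ρ :=
    spliceAt_injective.comp (idaRun_injective hpq h1 h2 h3 hv p)
  have : Infinite (BuchiRuns M (uvWord u v)) :=
    Infinite.of_injective (fun k => ⟨ρ k, hρ k⟩) fun k k' h => hρ_inj (congrArg Subtype.val h)
  exact Cardinal.aleph0_le_mk _
end

section
/- Pattern shifting for EDA: if A has an EDA pattern (p, v, π₁, π₂) such that π₁ or π₂ visits some accepting state, then A satisfies EDA_F, i.e., there is an EDA pattern (p', v', π'₁, π'₂) with p' ∈ F. -/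
/-!
If a state `q` lies on the first of two distinct `v`-loops at `p`, cut that loop at `q` into
`p ⟶ q` (label `v₁`) and `q ⟶ p` (label `v₂`). Going `q ⟶ p`, then around either loop, then
`p ⟶ q` gives two `q`-loops labelled `v₂ v v₁`; they share both ends, so they differ exactly
where the two original loops do.
-/

namespace IsPath

variable {Q A : Type} {δ : Q → A → Q → Prop}

theorem nil_iff {π : List Q} {p q : Q} : IsPath δ π [] p q ↔ π = [p] ∧ p = q := by
  constructor
  · rintro ⟨hlen, hhead, hlast, -⟩
    obtain ⟨x, rfl⟩ := List.length_eq_one_iff.mp hlen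
    simp_all
  · rintro ⟨rfl, rfl⟩
    simp [IsPath]

theorem cons_iff {π : List Q} {a : A} {v : List A} {p q : Q} :
    IsPath δ π (a :: v) p q ↔ ∃ r σ, π = p :: σ ∧ δ p a r ∧ IsPath δ σ v r q := by
  constructor
  · rintro ⟨hlen, hhead, hlast, hstep⟩
    rcases π with _ | ⟨x, _ | ⟨r, σ⟩⟩
    · simp at hlen
    · simp at hlen
    obtain rfl : x = p := by simpa using hhead
    exact ⟨r, r :: σ, rfl, hstep 0 a x r rfl rfl rfl, by simpa using hlen, rfl,
      by simpa using hlast, fun i => hstep (i + 1)⟩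
  · rintro ⟨r, σ, rfl, hpr, hlen, hhead, hlast, hstep⟩
    refine ⟨by simpa using hlen, rfl, by simp [List.getLast?_cons, hlast], ?_⟩
    rintro (_ | i) b s t hb hs ht
    · rw [List.head?_eq_getElem?] at hhead
      simp_all
    · exact hstep i b s t hb hs ht

theorem eq_cons_tail {π : List Q} {v : List A} {p q : Q} (h : IsPath δ π v p q) :
    π = p :: π.tail :=
  (List.cons_head?_tail h.2.1).symm

theorem append_s8 {π σ : List Q} {v w : List A} {p q r : Q}
    (hπ : IsPath δ π v p q) (hσ : IsPath δ σ w q r) :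
    IsPath δ (π ++ σ.tail) (v ++ w) p r := by
  induction v generalizing π p with
  | nil =>
    obtain ⟨rfl, rfl⟩ := nil_iff.mp hπ
    simpa [← hσ.eq_cons_tail] using hσ
  | cons a v ih =>
    obtain ⟨s, π', rfl, hstep, hπ'⟩ := cons_iff.mp hπ
    exact cons_iff.mpr ⟨s, _, rfl, hstep, ih hπ'⟩

theorem exists_of_append_cons {l₁ l₂ : List Q} {v : List A} {p q r : Q}
    (h : IsPath δ (l₁ ++ q :: l₂) v p r) :
    ∃ v₁ v₂, v = v₁ ++ v₂ ∧ IsPath δ (l₁ ++ [q]) v₁ p q ∧ IsPath δ (q :: l₂) v₂ q r := by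
  induction l₁ generalizing v p with
  | nil =>
    obtain rfl : p = q := by simpa using h.2.1.symm
    exact ⟨[], v, rfl, nil_iff.mpr ⟨rfl, rfl⟩, h⟩
  | cons x l₁ ih =>
    cases v with
    | nil => simp [nil_iff] at h
    | cons a v =>
      obtain ⟨s, σ, hπ, hstep, hσ⟩ := cons_iff.mp h
      obtain ⟨rfl, rfl⟩ := List.cons_eq_cons.mp hπ
      obtain ⟨v₁, v₂, rfl, h₁, h₂⟩ := ih hσ
      exact ⟨a :: v₁, v₂, rfl, cons_iff.mpr ⟨s, _, rfl, hstep, h₁⟩, h₂⟩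

end IsPath

theorem edaAt_of_mem_left {Q A : Type} {M : NAuto Q A} {p q : Q} {v : List A} {π₁ π₂ : List Q}
    (hne : π₁ ≠ π₂) (h₁ : IsPath M.Δ π₁ v p p) (h₂ : IsPath M.Δ π₂ v p p) (hq : q ∈ π₁) :
    EDAat M q := by
  obtain ⟨l₁, l₂, rfl⟩ := List.append_of_mem hq
  obtain ⟨v₁, v₂, rfl, hpre, hsuf⟩ := h₁.exists_of_append_cons
  refine ⟨v₂ ++ (v₁ ++ v₂) ++ v₁, _, _, ?_, (hsuf.append_s8 h₁).append_s8 hpre,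
    (hsuf.append_s8 h₂).append_s8 hpre⟩
  intro heq
  have htail := List.append_cancel_left (List.append_cancel_right heq)
  exact hne (by rw [h₁.eq_cons_tail, h₂.eq_cons_tail, htail])

theorem eda_shift {Q A : Type} (M : NAuto Q A)
    (p : Q) (v : List A) (π₁ π₂ : List Q) (hne : π₁ ≠ π₂)
    (h1 : IsPath M.Δ π₁ v p p) (h2 : IsPath M.Δ π₂ v p p)
    (q' : Q) (hq' : q' ∈ M.F) (hmem : q' ∈ π₁ ∨ q' ∈ π₂) :
    EDAF M := by
  rcases hmem with h | h
  · exact ⟨q', hq', edaAt_of_mem_left hne h1 h2 h⟩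
  · exact ⟨q', hq', edaAt_of_mem_left hne.symm h2 h1 h⟩
end

section
/- For any NBA A and infinite word w, the reduced split tree T_rs(A, w) contains at most |Q| infinite paths. -/
def stepSet {Q A : Type} (M : NAuto Q A) (P : Set Q) (a : A) : Set Q :=
  {q | ∃ p ∈ P, M.Δ p a q}

def splitLabelFrom {Q A : Type} (M : NAuto Q A) (w : ℕ → A) : Set Q → ℕ → List Bool → Set Q
  | P, _, [] => P
  | P, i, d :: u =>
      splitLabelFrom M w
        (if d then stepSet M P (w i) \ M.F else stepSet M P (w i) ∩ M.F) (i+1) u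

def splitLabel {Q A : Type} (M : NAuto Q A) (w : ℕ → A) (u : List Bool) : Set Q :=
  splitLabelFrom M w M.Q0 0 u

def LeftOf (u v : List Bool) : Prop :=
  u.length = v.length ∧ ∃ i, i < u.length ∧ u.take i = v.take i ∧
    u[i]? = some false ∧ v[i]? = some true

def rLabel {Q A : Type} (M : NAuto Q A) (w : ℕ → A) (u : List Bool) : Set Q :=
  splitLabel M w u \ ⋃ (v : List Bool) (_ : LeftOf v u), splitLabel M w v

def prefixNode (π : ℕ → Bool) (n : ℕ) : List Bool := List.ofFn (fun i : Fin n => π i)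

def IsRSTPath {Q A : Type} (M : NAuto Q A) (w : ℕ → A) (π : ℕ → Bool) : Prop :=
  ∀ n, (rLabel M w (prefixNode π n)).Nonempty

/-!
Distinct nodes on the same level of the reduced split tree have disjoint labels, since a state
survives only in the leftmost label containing it. Finitely many infinite paths already branch
apart above some level `n`, so their nodes at level `n` are distinct and carry pairwise disjoint
nonempty labels; choosing a state from each label gives an injection into `Q`.
-/

lemma LeftOf.cons {u v : List Bool} (h : LeftOf u v) (a : Bool) : LeftOf (a :: u) (a :: v) := by
  obtain ⟨hlen, i, hi, htake, hu, hv⟩ := h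
  exact ⟨by simp [hlen], i + 1, by simpa using hi, by simp [htake], by simpa using hu,
    by simpa using hv⟩

lemma leftOf_false_cons_true_cons {u v : List Bool} (hlen : u.length = v.length) :
    LeftOf (false :: u) (true :: v) :=
  ⟨by simp [hlen], 0, by simp, rfl, rfl, rfl⟩

lemma leftOf_or_leftOf_of_ne :
    ∀ {u v : List Bool}, u.length = v.length → u ≠ v → LeftOf u v ∨ LeftOf v u
  | [], [], _, hne => absurd rfl hne
  | a :: u, b :: v, hlen, hne => by
    have hlen' : u.length = v.length := by simpa using hlen
    by_cases hab : a = b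
    · subst hab
      have huv : u ≠ v := fun h => hne (h ▸ rfl)
      exact (leftOf_or_leftOf_of_ne hlen' huv).imp (·.cons a) (·.cons a)
    · cases a <;> cases b
      exacts [absurd rfl hab, .inl (leftOf_false_cons_true_cons hlen'),
        .inr (leftOf_false_cons_true_cons hlen'.symm), absurd rfl hab]

lemma LeftOf.disjoint_rLabel {Q A : Type} (M : NAuto Q A) (w : ℕ → A) {u v : List Bool}
    (h : LeftOf u v) : Disjoint (rLabel M w u) (rLabel M w v) :=
  Set.disjoint_left.mpr fun _ hu hv => hv.2 (Set.mem_iUnion₂.mpr ⟨u, h, hu.1⟩)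

lemma disjoint_rLabel_of_ne {Q A : Type} (M : NAuto Q A) (w : ℕ → A) {u v : List Bool}
    (hlen : u.length = v.length) (hne : u ≠ v) : Disjoint (rLabel M w u) (rLabel M w v) :=
  (leftOf_or_leftOf_of_ne hlen hne).elim (·.disjoint_rLabel M w)
    fun h => (h.disjoint_rLabel M w).symm

lemma prefixNode_eq_prefixNode_iff {π π' : ℕ → Bool} {n : ℕ} :
    prefixNode π n = prefixNode π' n ↔ ∀ i < n, π i = π' i := by
  simp [prefixNode, List.ofFn_inj, funext_iff, Fin.forall_iff]

lemma Set.Finite.exists_injOn_prefixNode {T : Set (ℕ → Bool)} (hT : T.Finite) :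
    ∃ n, T.InjOn (prefixNode · n) := by
  have hpairs : ∀ᶠ n in Filter.atTop, ∀ p ∈ T ×ˢ T,
      (∀ i < n, p.1 i = p.2 i) → p.1 = p.2 := by
    refine (Filter.eventually_all_finite (hT.prod hT)).mpr fun p _ => ?_
    by_cases hp : p.1 = p.2
    · exact Filter.Eventually.of_forall fun _ _ => hp
    obtain ⟨m, hm⟩ := Function.ne_iff.mp hp
    filter_upwards [Filter.eventually_gt_atTop m] with n hn hagree
    exact absurd (hagree m hn) hm
  obtain ⟨n, hn⟩ := hpairs.exists
  exact ⟨n, fun π hπ π' hπ' h =>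
    hn (π, π') ⟨hπ, hπ'⟩ (prefixNode_eq_prefixNode_iff.mp h)⟩

lemma card_le_of_forall_isRSTPath {Q A : Type} [Fintype Q] (M : NAuto Q A) (w : ℕ → A)
    {T : Finset (ℕ → Bool)} (hT : ∀ π ∈ T, IsRSTPath M w π) : T.card ≤ Fintype.card Q := by
  classical
  obtain ⟨n, hinj⟩ := T.finite_toSet.exists_injOn_prefixNode
  let label : (ℕ → Bool) → Finset Q := fun π => (rLabel M w (prefixNode π n)).toFinset
  have hdisj : (T : Set (ℕ → Bool)).PairwiseDisjoint label := fun π hπ π' hπ' hne =>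
    Set.disjoint_toFinset.mpr <|
      disjoint_rLabel_of_ne M w (by simp [prefixNode]) (hinj.ne hπ hπ' hne)
  calc T.card ≤ (T.biUnion label).card :=
        Finset.card_le_card_biUnion hdisj fun π hπ => Set.toFinset_nonempty.mpr (hT π hπ n)
    _ ≤ Fintype.card Q := Finset.card_le_univ _

lemma encard_setOf_isRSTPath_le {Q A : Type} [Fintype Q] (M : NAuto Q A) (w : ℕ → A) :
    {π | IsRSTPath M w π}.encard ≤ Fintype.card Q := by
  by_contra! hlt
  obtain ⟨T, hTS, hTcard⟩ := Set.exists_subset_encard_eq (Order.add_one_le_of_lt hlt)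
  have hTfin : T.Finite := Set.finite_of_encard_eq_coe hTcard
  have hle := card_le_of_forall_isRSTPath M w (T := hTfin.toFinset) fun π hπ =>
    hTS (hTfin.mem_toFinset.mp hπ)
  rw [hTfin.encard_eq_coe_toFinset_card] at hTcard
  norm_cast at hTcard
  omega

theorem rst_few_paths {Q A : Type} [Fintype Q] (M : NAuto Q A) (w : ℕ → A) :
    {π : ℕ → Bool | IsRSTPath M w π}.Finite ∧
    Nat.card {π : ℕ → Bool | IsRSTPath M w π} ≤ Fintype.card Q := by
  rw [Nat.card_coe_set_eq, ← Set.encard_le_coe_iff_finite_ncard_le]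
  exact encard_setOf_isRSTPath_le M w
end

section
/- Bounded ambiguity of the disambiguation construction: the NBA A' constructed from A has at most |Q| accepting runs on each infinite word, where Q is the state set of A. -/
def primeStep {Q A : Type} (M : NAuto Q A) (a : A) :
    Set Q × Set Q → Set Q × Set Q → Prop := fun PS PS' =>
  PS'.2.Nonempty ∧
  ((PS'.1 = stepSet M PS.1 a ∧ PS'.2 = (stepSet M PS.2 a ∩ M.F) \ PS'.1) ∨
   (PS'.1 = stepSet M PS.1 a ∪ (stepSet M PS.2 a ∩ M.F) ∧
    PS'.2 = (stepSet M PS.2 a \ M.F) \ PS'.1))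

def PrimeBuchiRuns {Q A : Type} (M : NAuto Q A) (w : ℕ → A) :
    Set (ℕ → Set Q × Set Q) :=
  {ρ | ρ 0 = (∅, M.Q0) ∧ (∀ i, primeStep M (w i) (ρ i) (ρ (i+1))) ∧
       ∀ n, ∃ m ≥ n, (ρ m).2 ⊆ M.F}

/-! Order the states of `A'` like the nodes on one level of the reduced split tree: `(P, S)` lies
left of `(P', S')` when `P ∪ S ⊆ P'`. Two successors of a common state are equal or comparable, and
comparability survives a step, since everything reached from the left state enters the left part of
the right one. As the `S`-component of a state is disjoint from its `P`-component, two runs that have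
separated carry disjoint nonempty `S`-components from the next step on. At a late enough level,
picking a state of `Q` in each `S`-component therefore maps any finite set of runs injectively
into `Q`. -/

open Filter

theorem Finset.card_le_of_eventually_disjoint {ι α : Type*} [Fintype α] (s : Finset ι)
    (S : ι → ℕ → Set α) (hne : ∀ i ∈ s, ∀ᶠ n in atTop, (S i n).Nonempty)
    (hdisj : ∀ i ∈ s, ∀ j ∈ s, i ≠ j → ∀ᶠ n in atTop, Disjoint (S i n) (S j n)) :
    s.card ≤ Fintype.card α := by
  classical
  have hall : ∀ᶠ n in atTop, ∀ i ∈ s, (S i n).Nonempty ∧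
      ∀ j ∈ s, i ≠ j → Disjoint (S i n) (S j n) := by
    refine (eventually_all_finset s).2 fun i hi => (hne i hi).and ?_
    refine (eventually_all_finset s).2 fun j hj => ?_
    by_cases hij : i = j
    · exact Eventually.of_forall fun _ h => absurd hij h
    · exact (hdisj i hi j hj hij).mono fun _ h _ => h
  obtain ⟨N, hN⟩ := hall.exists
  calc s.card ≤ (s.biUnion fun i => (S i N).toFinset).card :=
        Finset.card_le_card_biUnion
          (fun i hi j hj hij => Set.disjoint_toFinset.2 ((hN i hi).2 j hj hij))
          (fun i hi => Set.toFinset_nonempty.2 (hN i hi).1)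
    _ ≤ Fintype.card α := Finset.card_le_univ _

theorem Set.finite_and_natCard_le_of_eventually_disjoint {ι α : Type*} [Fintype α] (R : Set ι)
    (S : ι → ℕ → Set α) (hne : ∀ i ∈ R, ∀ᶠ n in atTop, (S i n).Nonempty)
    (hdisj : ∀ i ∈ R, ∀ j ∈ R, i ≠ j → ∀ᶠ n in atTop, Disjoint (S i n) (S j n)) :
    R.Finite ∧ Nat.card R ≤ Fintype.card α := by
  have hbound : ∀ s : Finset ι, ↑s ⊆ R → s.card ≤ Fintype.card α := fun s hs =>
    s.card_le_of_eventually_disjoint S (fun i hi => hne i (hs hi))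
      (fun i hi j hj => hdisj i (hs hi) j (hs hj))
  have hfin : R.Finite := by
    by_contra hinf
    obtain ⟨s, hsR, hcard⟩ := Set.Infinite.exists_subset_card_eq hinf (Fintype.card α + 1)
    have := hbound s hsR
    omega
  refine ⟨hfin, ?_⟩
  rw [Nat.card_coe_set_eq, Set.ncard_eq_toFinset_card R hfin]
  exact hbound _ (Set.Finite.coe_toFinset hfin).subset

section PrimeAutomaton

variable {Q A : Type}

lemma stepSet_mono (M : NAuto Q A) {P P' : Set Q} (h : P ⊆ P') (a : A) :
    stepSet M P a ⊆ stepSet M P' a := fun _ ⟨p, hp, hd⟩ => ⟨p, h hp, hd⟩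

lemma stepSet_union (M : NAuto Q A) (P S : Set Q) (a : A) :
    stepSet M (P ∪ S) a = stepSet M P a ∪ stepSet M S a := by
  ext q
  simp only [stepSet, Set.mem_ofPred_eq, Set.mem_union, or_and_right, exists_or]

def PrimeLeftOf (x y : Set Q × Set Q) : Prop := x.1 ∪ x.2 ⊆ y.1

lemma stepSet_fst_subset_of_primeStep {M : NAuto Q A} {a : A} {x y : Set Q × Set Q}
    (h : primeStep M a x y) : stepSet M x.1 a ⊆ y.1 := by
  rcases h.2 with ⟨h1, -⟩ | ⟨h1, -⟩ <;> rw [h1]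
  exact Set.subset_union_left

lemma union_subset_stepSet_of_primeStep {M : NAuto Q A} {a : A} {x y : Set Q × Set Q}
    (h : primeStep M a x y) : y.1 ∪ y.2 ⊆ stepSet M (x.1 ∪ x.2) a := by
  rw [stepSet_union]
  rcases h.2 with ⟨h1, h2⟩ | ⟨h1, h2⟩ <;> rw [h1, h2]
  · exact Set.union_subset_union_right _ fun q hq => hq.1.1
  · exact Set.union_subset (Set.union_subset_union_right _ Set.inter_subset_left)
      fun q hq => Or.inr hq.1.1

lemma disjoint_snd_fst_of_primeStep {M : NAuto Q A} {a : A} {x y : Set Q × Set Q}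
    (h : primeStep M a x y) : Disjoint y.2 y.1 := by
  rcases h.2 with ⟨-, h2⟩ | ⟨-, h2⟩ <;> rw [h2] <;> exact Set.disjoint_sdiff_left

lemma primeLeftOf_or_primeLeftOf_of_primeStep {M : NAuto Q A} {a : A} {z x y : Set Q × Set Q}
    (hx : primeStep M a z x) (hy : primeStep M a z y) (hne : x ≠ y) :
    PrimeLeftOf x y ∨ PrimeLeftOf y x := by
  rcases hx.2 with ⟨hx1, hx2⟩ | ⟨hx1, hx2⟩ <;> rcases hy.2 with ⟨hy1, hy2⟩ | ⟨hy1, hy2⟩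
  · exact absurd (Prod.ext (hx1.trans hy1.symm) (by rw [hx2, hy2, hx1, hy1])) hne
  · left
    rw [PrimeLeftOf, hy1, hx1, hx2]
    exact Set.union_subset_union_right _ fun q hq => hq.1
  · right
    rw [PrimeLeftOf, hx1, hy1, hy2]
    exact Set.union_subset_union_right _ fun q hq => hq.1
  · exact absurd (Prod.ext (hx1.trans hy1.symm) (by rw [hx2, hy2, hx1, hy1])) hne

lemma PrimeLeftOf.step {M : NAuto Q A} {a : A} {x y x' y' : Set Q × Set Q}
    (hxy : PrimeLeftOf x y) (hx : primeStep M a x x') (hy : primeStep M a y y') :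
    PrimeLeftOf x' y' :=
  (union_subset_stepSet_of_primeStep hx).trans
    ((stepSet_mono M hxy a).trans (stepSet_fst_subset_of_primeStep hy))

lemma PrimeLeftOf.disjoint_snd {M : NAuto Q A} {a : A} {x y z : Set Q × Set Q}
    (hxy : PrimeLeftOf x y) (hy : primeStep M a z y) : Disjoint x.2 y.2 :=
  ((disjoint_snd_fst_of_primeStep hy).mono_right (Set.subset_union_right.trans hxy)).symm

end PrimeAutomaton

section PrimeRuns

variable {Q A : Type} {M : NAuto Q A} {w : ℕ → A} {ρ ρ' : ℕ → Set Q × Set Q}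

lemma primeLeftOf_or_primeLeftOf_of_ne (h0 : ρ 0 = ρ' 0)
    (hρ : ∀ i, primeStep M (w i) (ρ i) (ρ (i + 1)))
    (hρ' : ∀ i, primeStep M (w i) (ρ' i) (ρ' (i + 1))) :
    ∀ n, ρ n ≠ ρ' n → PrimeLeftOf (ρ n) (ρ' n) ∨ PrimeLeftOf (ρ' n) (ρ n)
  | 0, h => absurd h0 h
  | n + 1, h => by
    by_cases hn : ρ n = ρ' n
    · exact primeLeftOf_or_primeLeftOf_of_primeStep (hρ n) (hn ▸ hρ' n) h
    · exact (primeLeftOf_or_primeLeftOf_of_ne h0 hρ hρ' n hn).imp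
        (fun hL => hL.step (hρ n) (hρ' n)) (fun hL => hL.step (hρ' n) (hρ n))

lemma disjoint_snd_succ_of_ne (h0 : ρ 0 = ρ' 0)
    (hρ : ∀ i, primeStep M (w i) (ρ i) (ρ (i + 1)))
    (hρ' : ∀ i, primeStep M (w i) (ρ' i) (ρ' (i + 1))) {n : ℕ} (hn : ρ n ≠ ρ' n) :
    Disjoint (ρ (n + 1)).2 (ρ' (n + 1)).2 := by
  rcases primeLeftOf_or_primeLeftOf_of_ne h0 hρ hρ' n hn with hL | hL
  · exact (hL.step (hρ n) (hρ' n)).disjoint_snd (hρ' n)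
  · exact ((hL.step (hρ' n) (hρ n)).disjoint_snd (hρ n)).symm

lemma eventually_disjoint_snd_of_ne (h0 : ρ 0 = ρ' 0)
    (hρ : ∀ i, primeStep M (w i) (ρ i) (ρ (i + 1)))
    (hρ' : ∀ i, primeStep M (w i) (ρ' i) (ρ' (i + 1))) (hne : ρ ≠ ρ') :
    ∀ᶠ n in atTop, Disjoint (ρ n).2 (ρ' n).2 := by
  obtain ⟨n, hn⟩ := Function.ne_iff.1 hne
  have hne_ge : ∀ m ≥ n, ρ m ≠ ρ' m := by
    refine Nat.le_induction hn fun m _ hm heq => ?_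
    have hself := disjoint_snd_succ_of_ne h0 hρ hρ' hm
    rw [← heq, disjoint_self] at hself
    exact (hρ m).1.ne_empty hself
  refine eventually_atTop.2 ⟨n + 1, fun m hm => ?_⟩
  obtain ⟨k, rfl⟩ := Nat.exists_eq_add_of_le' hm
  exact disjoint_snd_succ_of_ne h0 hρ hρ' (hne_ge (k + n) (Nat.le_add_left n k))

lemma eventually_snd_nonempty (hρ : ∀ i, primeStep M (w i) (ρ i) (ρ (i + 1))) :
    ∀ᶠ n in atTop, (ρ n).2.Nonempty := by
  refine eventually_atTop.2 ⟨1, fun m hm => ?_⟩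
  obtain ⟨k, rfl⟩ := Nat.exists_eq_add_of_le' hm
  exact (hρ k).1

end PrimeRuns

theorem prime_bounded_ambiguity {Q A : Type} [Fintype Q] (M : NAuto Q A) (w : ℕ → A) :
    (PrimeBuchiRuns M w).Finite ∧
    Nat.card (PrimeBuchiRuns M w) ≤ Fintype.card Q :=
  (PrimeBuchiRuns M w).finite_and_natCard_le_of_eventually_disjoint (fun ρ n => (ρ n).2)
    (fun _ hρ => eventually_snd_nonempty hρ.2.1)
    (fun _ hρ _ hρ' => eventually_disjoint_snd_of_ne (hρ.1.trans hρ'.1.symm) hρ.2.1 hρ'.2.1)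
end

section
/- If A satisfies EDA (two distinct v-labelled cycles at a state p) and p is reachable from an initial state by a word of length m, then for every k the number of distinct finite paths from Q₀ labelled by the word u v^k (where u reaches p) is at least 2^k; i.e., ambiguity of path prefixes grows exponentially. -/
/-! Choosing, independently for each of the `k` copies of `v`, one of the two distinct
`v`-loops at `p` and appending the choices to the run on `u` gives `2 ^ k` runs on `u v^k`.
All loops have length `|v| + 1`, so the concatenated run determines the sequence of choices;
hence these runs are pairwise distinct. Finiteness holds because every run on a word `w` is
a list of `|w| + 1` states of a finite automaton. -/

section Paths

variable {Q A : Type} {δ : Q → A → Q → Prop}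

theorem IsPath.eq_cons_tail_s19 {π : List Q} {w : List A} {p q : Q} (h : IsPath δ π w p q) :
    π = p :: π.tail := by
  obtain ⟨σ, rfl⟩ := List.head?_eq_some_iff.mp h.2.1
  rfl

theorem isPath_nil_iff {π : List Q} {p q : Q} : IsPath δ π [] p q ↔ π = [p] ∧ p = q := by
  constructor
  · rintro ⟨hlen, hhead, hlast, -⟩
    obtain ⟨σ, rfl⟩ := List.head?_eq_some_iff.mp hhead
    obtain rfl : σ = [] := List.eq_nil_of_length_eq_zero (by simpa using hlen)
    simpa using hlast
  · rintro ⟨rfl, rfl⟩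
    exact ⟨rfl, rfl, rfl, by simp⟩

theorem isPath_cons_iff {π : List Q} {a : A} {w : List A} {p q : Q} :
    IsPath δ π (a :: w) p q ↔ ∃ r σ, π = p :: σ ∧ δ p a r ∧ IsPath δ σ w r q := by
  constructor
  · rintro ⟨hlen, hhead, hlast, hstep⟩
    obtain ⟨σ, rfl⟩ := List.head?_eq_some_iff.mp hhead
    obtain ⟨r, ρ, rfl⟩ : ∃ r ρ, σ = r :: ρ :=
      List.exists_cons_of_ne_nil (List.ne_nil_of_length_pos (by simp at hlen; omega))
    refine ⟨r, r :: ρ, rfl, hstep 0 a p r rfl rfl rfl, by simpa using hlen, rfl, ?_,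
      fun i => hstep (i + 1)⟩
    rwa [List.getLast?_cons_cons] at hlast
  · rintro ⟨r, σ, rfl, hpr, hlen, hhead, hlast, hstep⟩
    obtain ⟨ρ, rfl⟩ := List.head?_eq_some_iff.mp hhead
    refine ⟨by simpa using hlen, rfl, by rwa [List.getLast?_cons_cons], ?_⟩
    rintro (_ | i) b s t hb hs ht
    · simp_all
    · exact hstep i b s t hb hs ht

theorem IsPath.append_s19 {π σ : List Q} {w w' : List A} {p q r : Q}
    (h₁ : IsPath δ π w p q) (h₂ : IsPath δ σ w' q r) :
    IsPath δ (π ++ σ.tail) (w ++ w') p r := by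
  induction w generalizing π p with
  | nil =>
    obtain ⟨rfl, rfl⟩ := isPath_nil_iff.mp h₁
    rwa [List.singleton_append, ← h₂.eq_cons_tail_s19]
  | cons a w ih =>
    obtain ⟨s, ρ, rfl, hps, hρ⟩ := isPath_cons_iff.mp h₁
    exact isPath_cons_iff.mpr ⟨s, ρ ++ σ.tail, rfl, hps, ih hρ⟩

theorem isPath_flatten_loops {p : Q} {v : List A} {loops : List (List Q)}
    (h : ∀ π ∈ loops, IsPath δ π v p p) :
    IsPath δ (p :: (loops.map List.tail).flatten) (List.replicate loops.length v).flatten p p := by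
  induction loops with
  | nil => exact isPath_nil_iff.mpr ⟨rfl, rfl⟩
  | cons π loops ih =>
    have hπ := h π List.mem_cons_self
    have := hπ.append_s19 (ih fun σ hσ => h σ (List.mem_cons_of_mem π hσ))
    rwa [List.tail_cons, hπ.eq_cons_tail_s19, List.cons_append] at this

theorem card_pow_le_card_isPath [Finite Q] {ι : Type} {loop : ι → List Q}
    (hloop : Function.Injective loop) {p : Q} {v : List A}
    (hcycle : ∀ i, IsPath δ (loop i) v p p) {π₀ : List Q} {u : List A} {q₀ : Q}
    (h₀ : IsPath δ π₀ u q₀ p) (k : ℕ) :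
    Nat.card ι ^ k ≤ Nat.card {π | IsPath δ π (u ++ (List.replicate k v).flatten) q₀ p} := by
  let pump (c : Fin k → ι) : List Q := π₀ ++ (List.ofFn (List.tail ∘ loop ∘ c)).flatten
  have hpump (c : Fin k → ι) : IsPath δ (pump c) (u ++ (List.replicate k v).flatten) q₀ p := by
    have hloops := isPath_flatten_loops (loops := List.ofFn (loop ∘ c))
      (by simpa using fun j => hcycle (c j))
    simpa [List.map_ofFn] using h₀.append_s19 hloops
  have htail : Function.Injective (List.tail ∘ loop) := fun i j hij =>
    hloop <| by rw [(hcycle i).eq_cons_tail_s19, (hcycle j).eq_cons_tail_s19]; exact congrArg _ hij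
  have hpump_inj : Function.Injective pump := by
    intro c c' hcc'
    have hblocks := List.eq_iff_flatten_eq.mpr ⟨List.append_cancel_left hcc', by
      simp [List.map_ofFn, Function.comp_def, (hcycle _).1]⟩
    exact funext fun j => htail (congrFun (List.ofFn_injective hblocks) j)
  have : Finite {π | IsPath δ π (u ++ (List.replicate k v).flatten) q₀ p} :=
    ((List.finite_length_eq Q _).subset fun π (hπ : IsPath δ π _ q₀ p) => hπ.1).to_subtype
  calc Nat.card ι ^ k = Nat.card (Fin k → ι) := by simp [Nat.card_fun]
    _ ≤ _ := Nat.card_le_card_of_injective (fun c => ⟨pump c, hpump c⟩)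
      fun c c' h => hpump_inj (congrArg Subtype.val h)

end Paths

theorem eda_exponential_growth_general {Q A : Type} [Fintype Q] (M : NAuto Q A)
    (p : Q) (v : List A) (π₁ π₂ : List Q) (hne : π₁ ≠ π₂)
    (h1 : IsPath M.Δ π₁ v p p) (h2 : IsPath M.Δ π₂ v p p)
    (u : List A)
    (q0 : Q) (hq0 : q0 ∈ M.Q0) (π₀ : List Q) (h0 : IsPath M.Δ π₀ u q0 p)
    (k : ℕ) :
    {π : List Q | ∃ s ∈ M.Q0, ∃ t : Q,
        IsPath M.Δ π (u ++ (List.replicate k v).flatten) s t}.Finite ∧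
    2 ^ k ≤ Nat.card {π : List Q | ∃ s ∈ M.Q0, ∃ t : Q,
        IsPath M.Δ π (u ++ (List.replicate k v).flatten) s t} := by
  have hfin : {π : List Q | ∃ s ∈ M.Q0, ∃ t : Q,
      IsPath M.Δ π (u ++ (List.replicate k v).flatten) s t}.Finite :=
    (List.finite_length_eq Q _).subset fun π ⟨_, _, _, hπ⟩ => hπ.1
  have hloop : Function.Injective (cond · π₁ π₂) := Bool.injective_iff.mpr hne.symm
  refine ⟨hfin, ?_⟩
  calc 2 ^ k = Nat.card Bool ^ k := by simp
    _ ≤ _ := card_pow_le_card_isPath hloop (by rintro (_ | _) <;> assumption) h0 k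
    _ ≤ _ := Nat.card_mono hfin fun π hπ => ⟨q0, hq0, p, hπ⟩

theorem eda_exponential_growth {Q A : Type} [Fintype Q] (M : NAuto Q A)
    (p : Q) (v : List A) (hv : v ≠ []) (π₁ π₂ : List Q) (hne : π₁ ≠ π₂)
    (h1 : IsPath M.Δ π₁ v p p) (h2 : IsPath M.Δ π₂ v p p)
    (u : List A) (m : ℕ) (hm : u.length = m)
    (q0 : Q) (hq0 : q0 ∈ M.Q0) (π₀ : List Q) (h0 : IsPath M.Δ π₀ u q0 p)
    (k : ℕ) :
    {π : List Q | ∃ s ∈ M.Q0, ∃ t : Q,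
        IsPath M.Δ π (u ++ (List.replicate k v).flatten) s t}.Finite ∧
    2 ^ k ≤ Nat.card {π : List Q | ∃ s ∈ M.Q0, ∃ t : Q,
        IsPath M.Δ π (u ++ (List.replicate k v).flatten) s t} :=
  eda_exponential_growth_general M p v π₁ π₂ hne h1 h2 u q0 hq0 π₀ h0 k
end
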